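/- arXiv:1704.02219 — 2 statements merged into one kernel-verified Lean document; each statement's English description precedes it below -/
import Mathlib

section
/- Let γ : [−1,1] → ℂ be continuously differentiable with γ'(t) ≠ 0, let n(t) = iγ'(t)/|γ'(t)|, and let σ : [−1,1] → ℂ be continuous. Let z₀ ∈ ℂ with r := inf_{t∈[−1,1]} |γ(t) − z₀| > 0, and define a_m = −(r^m/(2π)) ∫_{−1}^{1} σ(t) n(t) (γ(t) − z₀)^{−(m+1)} |γ'(t)| dt. Then for every z ∈ ℂ with |z − z₀| < r, the complex double layer potential v(z) = (1/(2π)) ∫_{−1}^{1} n(t) σ(t) (z − γ(t))^{−1} |γ'(t)| dt equals the absolutely convergent series Σ_{m=0}^∞ a_m (z − z₀)^m / r^m. -/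
open scoped Real
open Complex MeasureTheory

/-!
For `‖z - z₀‖ < r ≤ ‖γ t - z₀‖` the kernel expands as a geometric series,
`(z - γ t)⁻¹ = -∑ (z - z₀) ^ m / (γ t - z₀) ^ (m + 1)`, whose `m`-th term is bounded by
`(‖z - z₀‖ / r) ^ m / r`. The series of the integrals of the norms therefore converges, so sum and
integral may be interchanged; the factor `r ^ m` in `a m` is exactly cancelled by `/ r ^ m`.
-/

theorem hasSum_pow_mul_inv_pow_succ {w c : ℂ} (h : ‖w‖ < ‖c‖) :
    HasSum (fun m : ℕ => w ^ m * (c ^ (m + 1))⁻¹) (c - w)⁻¹ := by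
  have hc : c ≠ 0 := norm_pos_iff.mp ((norm_nonneg w).trans_lt h)
  have hq : ‖w / c‖ < 1 := by rwa [norm_div, div_lt_one (norm_pos_iff.mpr hc)]
  have hlim : c⁻¹ * (1 - w / c)⁻¹ = (c - w)⁻¹ := by
    rw [← mul_inv, mul_sub, mul_one, mul_div_cancel₀ _ hc]
  rw [← hlim]
  exact ((hasSum_geometric_of_norm_lt_one hq).mul_left c⁻¹).congr_fun fun m => by ring

theorem norm_pow_mul_mul_inv_pow_succ_le {w c x : ℂ} {r : ℝ} (hr : 0 < r) (hc : r ≤ ‖c‖)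
    (m : ℕ) : ‖w ^ m * (x * (c ^ (m + 1))⁻¹)‖ ≤ ‖x‖ / r * (‖w‖ / r) ^ m := by
  have hcm : r ^ (m + 1) ≤ ‖c‖ ^ (m + 1) := pow_le_pow_left₀ hr.le hc _
  calc ‖w ^ m * (x * (c ^ (m + 1))⁻¹)‖ = ‖x‖ * ‖w‖ ^ m / ‖c‖ ^ (m + 1) := by
        rw [norm_mul, norm_mul, norm_inv, norm_pow, norm_pow]; ring
    _ ≤ ‖x‖ * ‖w‖ ^ m / r ^ (m + 1) := by gcongr
    _ = ‖x‖ / r * (‖w‖ / r) ^ m := by rw [div_pow, pow_succ]; field_simp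

section

variable {α : Type*} [MeasurableSpace α] {μ : Measure α} {g c : α → ℂ} {r : ℝ} {w : ℂ}

theorem summable_integral_norm_pow_mul_mul_inv_pow_succ (hg : Integrable g μ)
    (hcr : ∀ᵐ t ∂μ, r ≤ ‖c t‖) (hw : ‖w‖ < r) :
    Summable fun m : ℕ => ∫ t, ‖w ^ m * (g t * (c t ^ (m + 1))⁻¹)‖ ∂μ := by
  have hr : 0 < r := (norm_nonneg w).trans_lt hw
  have hbound : ∀ m : ℕ, ∫ t, ‖w ^ m * (g t * (c t ^ (m + 1))⁻¹)‖ ∂μ ≤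
      (∫ t, ‖g t‖ ∂μ) / r * (‖w‖ / r) ^ m := by
    intro m
    rw [← integral_div, ← integral_mul_const]
    exact integral_mono_of_nonneg (.of_forall fun t => norm_nonneg _)
      ((hg.norm.div_const r).mul_const _)
      (hcr.mono fun t ht => norm_pow_mul_mul_inv_pow_succ_le hr ht m)
  refine Summable.of_nonneg_of_le (fun m => integral_nonneg fun t => norm_nonneg _) hbound ?_
  exact (summable_geometric_of_lt_one (by positivity) ((div_lt_one hr).mpr hw)).mul_left _

theorem summable_norm_pow_mul_integral_mul_inv_pow_succ (hg : Integrable g μ)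
    (hcr : ∀ᵐ t ∂μ, r ≤ ‖c t‖) (hw : ‖w‖ < r) :
    Summable fun m : ℕ => ‖w ^ m * ∫ t, g t * (c t ^ (m + 1))⁻¹ ∂μ‖ := by
  refine (summable_integral_norm_pow_mul_mul_inv_pow_succ hg hcr hw).of_nonneg_of_le
    (fun m => norm_nonneg _) fun m => ?_
  rw [← integral_const_mul]
  exact norm_integral_le_integral_norm _

theorem hasSum_pow_mul_integral_mul_inv_pow_succ (hg : Integrable g μ)
    (hc : AEStronglyMeasurable c μ) (hcr : ∀ᵐ t ∂μ, r ≤ ‖c t‖) (hw : ‖w‖ < r) :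
    HasSum (fun m : ℕ => w ^ m * ∫ t, g t * (c t ^ (m + 1))⁻¹ ∂μ)
      (∫ t, g t * (c t - w)⁻¹ ∂μ) := by
  have hr : 0 < r := (norm_nonneg w).trans_lt hw
  have hint : ∀ m : ℕ, Integrable (fun t => w ^ m * (g t * (c t ^ (m + 1))⁻¹)) μ := by
    intro m
    refine (hg.mul_bdd (c := (r ^ (m + 1))⁻¹)
      (hc.aemeasurable.pow_const (m + 1)).inv.aestronglyMeasurable ?_).const_mul _
    filter_upwards [hcr] with t ht
    rw [Pi.inv_apply, norm_inv, norm_pow]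
    exact inv_anti₀ (by positivity) (pow_le_pow_left₀ hr.le ht _)
  have hpt : (fun t => ∑' m : ℕ, w ^ m * (g t * (c t ^ (m + 1))⁻¹)) =ᵐ[μ]
      fun t => g t * (c t - w)⁻¹ := by
    filter_upwards [hcr] with t ht
    simp_rw [mul_left_comm (w ^ _)]
    exact ((hasSum_pow_mul_inv_pow_succ (hw.trans_le ht)).mul_left (g t)).tsum_eq
  have hsum := hasSum_integral_of_summable_integral_norm hint
    (summable_integral_norm_pow_mul_mul_inv_pow_succ hg hcr hw)
  simp_rw [← integral_const_mul]
  rwa [integral_congr_ae hpt] at hsum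

end

theorem stmt_3_general (γ γ' : ℝ → ℂ) (σ : ℝ → ℂ) (z₀ : ℂ) (r : ℝ) (a : ℕ → ℂ) (v : ℂ → ℂ)
    (hγ : ∀ t ∈ Set.Icc (-1 : ℝ) 1, HasDerivAt γ (γ' t) t)
    (hγ'c : ContinuousOn γ' (Set.Icc (-1 : ℝ) 1))
    (hσ : ContinuousOn σ (Set.Icc (-1 : ℝ) 1))
    (hr : r = ⨅ t : Set.Icc (-1 : ℝ) 1, ‖γ t - z₀‖)
    (ha : ∀ m : ℕ, a m =
      -((r : ℂ) ^ m / (2 * π)) * ∫ t in (-1 : ℝ)..1,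
        σ t * (Complex.I * γ' t / ((‖γ' t‖ : ℝ) : ℂ)) *
          ((γ t - z₀) ^ (m + 1))⁻¹ * ((‖γ' t‖ : ℝ) : ℂ))
    (hv : ∀ z : ℂ, v z =
      (1 / (2 * π)) * ∫ t in (-1 : ℝ)..1,
        (Complex.I * γ' t / ((‖γ' t‖ : ℝ) : ℂ)) * σ t *
          (z - γ t)⁻¹ * ((‖γ' t‖ : ℝ) : ℂ)) :
    ∀ z : ℂ, ‖z - z₀‖ < r →
      Summable (fun m : ℕ => ‖a m * (z - z₀) ^ m / (r : ℂ) ^ m‖) ∧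
        HasSum (fun m : ℕ => a m * (z - z₀) ^ m / (r : ℂ) ^ m) (v z) := by
  intro z hz
  have hr0 : (r : ℂ) ≠ 0 := ofReal_ne_zero.mpr ((norm_nonneg _).trans_lt hz).ne'
  set μ := volume.restrict (Set.Ioc (-1 : ℝ) 1)
  set g : ℝ → ℂ := fun t => σ t * (I * γ' t)
  have hg : Integrable g μ :=
    ((hσ.mul (continuousOn_const.mul hγ'c)).integrableOn_Icc).mono_set Set.Ioc_subset_Icc_self
  have hc : AEStronglyMeasurable (fun t => γ t - z₀) μ :=
    ((continuousOn_of_forall_continuousAt fun t ht => (hγ t ht).continuousAt).sub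
      continuousOn_const |>.mono Set.Ioc_subset_Icc_self).aestronglyMeasurable measurableSet_Ioc
  have hcr : ∀ᵐ t ∂μ, r ≤ ‖γ t - z₀‖ := ae_restrict_of_forall_mem measurableSet_Ioc fun t ht =>
    hr ▸ ciInf_le ⟨0, by rintro _ ⟨_, rfl⟩; positivity⟩
      (⟨t, Set.Ioc_subset_Icc_self ht⟩ : Set.Icc (-1 : ℝ) 1)
  -- `n(t) |γ'(t)| = I γ'(t)` holds even where `γ'(t) = 0`, both sides being `0` there.
  have hnormal : ∀ t, I * γ' t / (‖γ' t‖ : ℂ) * (‖γ' t‖ : ℂ) = I * γ' t := fun t =>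
    div_mul_cancel_of_imp fun h => by simp_all
  have hterm : ∀ m : ℕ, a m * (z - z₀) ^ m / (r : ℂ) ^ m =
      -(1 / (2 * π)) * ((z - z₀) ^ m * ∫ t, g t * ((γ t - z₀) ^ (m + 1))⁻¹ ∂μ) := by
    intro m
    have hint : (∫ t in (-1 : ℝ)..1, σ t * (I * γ' t / (‖γ' t‖ : ℂ)) *
        ((γ t - z₀) ^ (m + 1))⁻¹ * (‖γ' t‖ : ℂ)) = ∫ t, g t * ((γ t - z₀) ^ (m + 1))⁻¹ ∂μ := by
      rw [intervalIntegral.integral_of_le (by norm_num)]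
      refine integral_congr_ae (.of_forall fun t => ?_)
      linear_combination (σ t * ((γ t - z₀) ^ (m + 1))⁻¹) * hnormal t
    rw [ha, hint]
    field_simp
  have hvz : v z = -(1 / (2 * π)) * ∫ t, g t * ((γ t - z₀) - (z - z₀))⁻¹ ∂μ := by
    rw [hv, intervalIntegral.integral_of_le (by norm_num), neg_mul, ← mul_neg, ← integral_neg]
    congr 1
    refine integral_congr_ae (.of_forall fun t => ?_)
    have hflip : (z - γ t)⁻¹ = -(γ t - z₀ - (z - z₀))⁻¹ := by rw [← inv_neg]; ring_nf
    dsimp only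
    rw [hflip]
    linear_combination -(σ t * (γ t - z₀ - (z - z₀))⁻¹) * hnormal t
  simp_rw [hterm, hvz]
  refine ⟨?_, (hasSum_pow_mul_integral_mul_inv_pow_succ hg hc hcr hz).mul_left _⟩
  simpa only [norm_mul] using (summable_norm_pow_mul_integral_mul_inv_pow_succ hg hcr hz).mul_left
    ‖-(1 / (2 * (π : ℂ)))‖

/-- Local expansion of the Laplace double layer potential: for `|z - z₀| < r`,
the complex double layer potential `v(z)` equals the absolutely convergent series
`∑ a_m (z - z₀)^m / r^m`, with `a_m` the QBX coefficients. -/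
theorem stmt_3 (γ γ' : ℝ → ℂ) (σ : ℝ → ℂ) (z₀ : ℂ) (r : ℝ) (a : ℕ → ℂ) (v : ℂ → ℂ)
    (hγ : ∀ t ∈ Set.Icc (-1 : ℝ) 1, HasDerivAt γ (γ' t) t)
    (hγ'c : ContinuousOn γ' (Set.Icc (-1 : ℝ) 1))
    (hγ'0 : ∀ t ∈ Set.Icc (-1 : ℝ) 1, γ' t ≠ 0)
    (hσ : ContinuousOn σ (Set.Icc (-1 : ℝ) 1))
    (hr : r = ⨅ t : Set.Icc (-1 : ℝ) 1, ‖γ t - z₀‖)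
    (hrpos : 0 < r)
    (ha : ∀ m : ℕ, a m =
      -((r : ℂ) ^ m / (2 * π)) * ∫ t in (-1 : ℝ)..1,
        σ t * (Complex.I * γ' t / ((‖γ' t‖ : ℝ) : ℂ)) *
          ((γ t - z₀) ^ (m + 1))⁻¹ * ((‖γ' t‖ : ℝ) : ℂ))
    (hv : ∀ z : ℂ, v z =
      (1 / (2 * π)) * ∫ t in (-1 : ℝ)..1,
        (Complex.I * γ' t / ((‖γ' t‖ : ℝ) : ℂ)) * σ t *
          (z - γ t)⁻¹ * ((‖γ' t‖ : ℝ) : ℂ)) :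
    ∀ z : ℂ, ‖z - z₀‖ < r →
      Summable (fun m : ℕ => ‖a m * (z - z₀) ^ m / (r : ℂ) ^ m‖) ∧
        HasSum (fun m : ℕ => a m * (z - z₀) ^ m / (r : ℂ) ^ m) (v z) :=
  stmt_3_general γ γ' σ z₀ r a v hγ hγ'c hσ hr ha hv
end

section
/- Let ρ > 1, n ≥ 1 an integer, m ∈ ℕ, and let γ(θ) = a cos θ + i b sin θ with a = (ρ + ρ⁻¹)/2, b = (ρ − ρ⁻¹)/2 parametrize the Bernstein ellipse B_ρ. Let t₀ ∈ ℂ, let h and k be holomorphic on a neighborhood of t₀, and set f(t) = h(t)/(t − t₀)^{m+1}. Suppose |f(γ(θ))| ≤ M_ρ and |k(γ(θ))| ≤ 2πC_ρ/ρ^{2n+1} for all θ ∈ [0, 2π], and that |k^{(ℓ)}(t₀)| ≤ K and |h^{(ℓ)}(t₀)| ≤ H for all 0 ≤ ℓ ≤ m. Then |(1/(2πi)) ∫₀^{2π} f(γ(θ)) k(γ(θ)) γ'(θ) dθ − (1/m!) Σ_{ℓ=0}^{m} binom(m, ℓ) k^{(m−ℓ)}(t₀) h^{(ℓ)}(t₀)|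 ≤ 4C_ρM_ρ/ρ^{2n} + (2^m/m!) K H. -/
/-!
The residue term is bounded termwise, using `∑ binom(m, ℓ) = 2^m`. For the contour term,
`|γ'(θ)| ≤ a |sin θ| + b |cos θ|` and `|sin|`, `|cos|` both integrate to `4` over a period,
so the integral is at most `4 (a + b) = 4ρ` times the sup of `|f k|` on the ellipse; the factor
`ρ` cancels one power of `ρ` in the bound on `k`.
-/

open scoped Real
open Real Function intervalIntegral

theorem integral_abs_sin_add_two_pi (t : ℝ) : ∫ x in t..t + 2 * π, |sin x| = 4 := by
  have hper : Periodic (fun x ↦ |sin x|) π := fun x ↦ by simp [sin_add_pi]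
  have hint : ∀ a b, IntervalIntegrable (fun x ↦ |sin x|) MeasureTheory.volume a b :=
    fun a b ↦ continuous_sin.abs.intervalIntegrable a b
  have hhalf : ∫ x in (0 : ℝ)..π, |sin x| = 2 := by
    rw [integral_congr fun x hx ↦ abs_of_nonneg <| by
      rw [Set.uIcc_of_le pi_nonneg] at hx
      exact sin_nonneg_of_nonneg_of_le_pi hx.1 hx.2]
    norm_num [integral_sin]
  have := hper.intervalIntegral_add_zsmul_eq 2 t hint
  rw [hper.intervalIntegral_add_eq t 0, zero_add, hhalf] at this
  rw [two_mul, ← two_smul ℤ π, this]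
  norm_num

theorem integral_abs_cos_add_two_pi (t : ℝ) : ∫ x in t..t + 2 * π, |cos x| = 4 := by
  simp_rw [← sin_add_pi_div_two]
  rw [integral_comp_add_right (fun x ↦ |sin x|), add_right_comm]
  exact integral_abs_sin_add_two_pi _

theorem norm_ellipse_deriv_le (a b θ : ℝ) :
    ‖-(a : ℂ) * sin θ + Complex.I * b * cos θ‖ ≤ |a| * |sin θ| + |b| * |cos θ| := by
  refine (norm_add_le _ _).trans ?_
  simp only [norm_mul, norm_neg, Complex.norm_I, Complex.norm_real, Real.norm_eq_abs, one_mul,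
    le_refl]

theorem norm_integral_mul_ellipse_deriv_le (a b L : ℝ) (G : ℝ → ℂ)
    (hG : ∀ θ ∈ Set.Icc (0 : ℝ) (2 * π), ‖G θ‖ ≤ L) :
    ‖∫ θ in (0 : ℝ)..(2 * π), G θ * (-(a : ℂ) * sin θ + Complex.I * b * cos θ)‖ ≤
      4 * (|a| + |b|) * L := by
  have hsin : IntervalIntegrable (fun θ ↦ |a| * |sin θ|) MeasureTheory.volume 0 (2 * π) :=
    (continuous_const.mul continuous_sin.abs).intervalIntegrable _ _
  have hcos : IntervalIntegrable (fun θ ↦ |b| * |cos θ|) MeasureTheory.volume 0 (2 * π) :=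
    (continuous_const.mul continuous_cos.abs).intervalIntegrable _ _
  have hbound := norm_integral_le_of_norm_le (by positivity)
    (Filter.Eventually.of_forall fun θ hθ ↦
      norm_mul_le_of_le (hG θ (Set.Ioc_subset_Icc_self hθ)) (norm_ellipse_deriv_le a b θ))
    ((hsin.add hcos).const_mul L)
  refine hbound.trans_eq ?_
  have h₁ := integral_abs_sin_add_two_pi 0
  have h₂ := integral_abs_cos_add_two_pi 0
  rw [zero_add] at h₁ h₂
  rw [integral_const_mul, integral_add hsin hcos, integral_const_mul, integral_const_mul, h₁, h₂]
  ring

theorem norm_inv_factorial_mul_sum_choose_mul_le {𝕜 : Type*} [RCLike 𝕜] (m : ℕ) (x y : ℕ → 𝕜)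
    (K H : ℝ) (hx : ∀ ℓ ≤ m, ‖x ℓ‖ ≤ K) (hy : ∀ ℓ ≤ m, ‖y ℓ‖ ≤ H) :
    ‖(1 / (m.factorial : 𝕜)) * ∑ ℓ ∈ Finset.range (m + 1), (m.choose ℓ : 𝕜) * x (m - ℓ) * y ℓ‖ ≤
      2 ^ m / m.factorial * K * H := by
  have hterm : ∀ ℓ ∈ Finset.range (m + 1),
      ‖(m.choose ℓ : 𝕜) * x (m - ℓ) * y ℓ‖ ≤ m.choose ℓ * (K * H) := by
    intro ℓ hℓ
    rw [mul_assoc, norm_mul, RCLike.norm_natCast]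
    exact mul_le_mul_of_nonneg_left
      (norm_mul_le_of_le (hx _ (Nat.sub_le m ℓ)) (hy _ (Finset.mem_range_succ_iff.mp hℓ)))
      (Nat.cast_nonneg _)
  have hsum : ∑ ℓ ∈ Finset.range (m + 1), (m.choose ℓ : ℝ) = 2 ^ m := by
    exact_mod_cast Nat.sum_range_choose m
  calc _ ≤ 1 / m.factorial * ∑ ℓ ∈ Finset.range (m + 1), (m.choose ℓ : ℝ) * (K * H) := by
        rw [norm_mul, norm_div, norm_one, RCLike.norm_natCast]
        gcongr
        exact (norm_sum_le _ _).trans (Finset.sum_le_sum hterm)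
    _ = 2 ^ m / m.factorial * K * H := by
        rw [← Finset.sum_mul, hsum]
        ring

theorem stmt_11_general (ρ : ℝ) (hρ : 1 < ρ) (n : ℕ) (m : ℕ)
    (γ γ' : ℝ → ℂ)
    (hγ' : ∀ θ : ℝ, γ' θ = -(((ρ + ρ⁻¹) / 2 : ℝ) : ℂ) * Real.sin θ
        + Complex.I * (((ρ - ρ⁻¹) / 2 : ℝ) : ℂ) * Real.cos θ)
    (t₀ : ℂ) (h k : ℂ → ℂ) (f : ℂ → ℂ)
    (M C K H : ℝ)
    (hfM : ∀ θ ∈ Set.Icc (0 : ℝ) (2 * π), norm (f (γ θ)) ≤ M)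
    (hkC : ∀ θ ∈ Set.Icc (0 : ℝ) (2 * π),
      norm (k (γ θ)) ≤ 2 * π * C / ρ ^ (2 * n + 1))
    (hK : ∀ ℓ : ℕ, ℓ ≤ m → norm (iteratedDeriv ℓ k t₀) ≤ K)
    (hH : ∀ ℓ : ℕ, ℓ ≤ m → norm (iteratedDeriv ℓ h t₀) ≤ H) :
    norm ((1 / (2 * π * Complex.I)) *
        (∫ θ in (0 : ℝ)..(2 * π), f (γ θ) * k (γ θ) * γ' θ)
        - (1 / (m.factorial : ℂ)) *
            ∑ ℓ ∈ Finset.range (m + 1),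
              (m.choose ℓ : ℂ) * iteratedDeriv (m - ℓ) k t₀ * iteratedDeriv ℓ h t₀)
      ≤ 4 * C * M / ρ ^ (2 * n) + (2 ^ m / (m.factorial : ℝ)) * K * H := by
  have hρ₀ : 0 < ρ := zero_lt_one.trans hρ
  have hb : 0 ≤ (ρ - ρ⁻¹) / 2 := by
    have := inv_lt_one_of_one_lt₀ hρ
    linarith
  have hcontour := norm_integral_mul_ellipse_deriv_le ((ρ + ρ⁻¹) / 2) ((ρ - ρ⁻¹) / 2) _ _
    fun θ hθ ↦ norm_mul_le_of_le (hfM θ hθ) (hkC θ hθ)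
  simp only [← hγ'] at hcontour
  have hresidue := norm_inv_factorial_mul_sum_choose_mul_le m _ _ K H hK hH
  have hnorm : ‖1 / (2 * π * Complex.I)‖ = 1 / (2 * π) := by
    simp [abs_of_pos pi_pos]
  calc _ ≤ 1 / (2 * π) * (4 * (|(ρ + ρ⁻¹) / 2| + |(ρ - ρ⁻¹) / 2|) *
          (M * (2 * π * C / ρ ^ (2 * n + 1)))) + 2 ^ m / m.factorial * K * H := by
        refine (norm_sub_le _ _).trans (add_le_add ?_ hresidue)
        rw [norm_mul, hnorm]
        gcongr
    _ = _ := by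
        rw [abs_of_nonneg hb, abs_of_pos (by positivity), pow_succ]
        field_simp
        ring

/-- Bound for the Gauss–Legendre quadrature error formula: the contour integral along
the Bernstein ellipse `B_ρ` minus the residue at the pole `t₀` of order `m+1` is
bounded by `4C_ρM_ρ/ρ^{2n} + (2^m/m!) K H`. -/
theorem stmt_11 (ρ : ℝ) (hρ : 1 < ρ) (n : ℕ) (hn : 1 ≤ n) (m : ℕ)
    (γ γ' : ℝ → ℂ)
    (hγ : ∀ θ : ℝ, γ θ = (((ρ + ρ⁻¹) / 2 : ℝ) : ℂ) * Real.cos θ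
        + Complex.I * (((ρ - ρ⁻¹) / 2 : ℝ) : ℂ) * Real.sin θ)
    (hγ' : ∀ θ : ℝ, γ' θ = -(((ρ + ρ⁻¹) / 2 : ℝ) : ℂ) * Real.sin θ
        + Complex.I * (((ρ - ρ⁻¹) / 2 : ℝ) : ℂ) * Real.cos θ)
    (t₀ : ℂ) (U : Set ℂ) (hU : IsOpen U) (ht₀ : t₀ ∈ U)
    (h k : ℂ → ℂ) (hh : DifferentiableOn ℂ h U) (hk : DifferentiableOn ℂ k U)
    (f : ℂ → ℂ) (hf : ∀ t : ℂ, t ≠ t₀ → f t = h t / (t - t₀) ^ (m + 1))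
    (M C K H : ℝ)
    (hfM : ∀ θ ∈ Set.Icc (0 : ℝ) (2 * π), norm (f (γ θ)) ≤ M)
    (hkC : ∀ θ ∈ Set.Icc (0 : ℝ) (2 * π),
      norm (k (γ θ)) ≤ 2 * π * C / ρ ^ (2 * n + 1))
    (hK : ∀ ℓ : ℕ, ℓ ≤ m → norm (iteratedDeriv ℓ k t₀) ≤ K)
    (hH : ∀ ℓ : ℕ, ℓ ≤ m → norm (iteratedDeriv ℓ h t₀) ≤ H) :
    norm ((1 / (2 * π * Complex.I)) *
        (∫ θ in (0 : ℝ)..(2 * π), f (γ θ) * k (γ θ) * γ' θ)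
        - (1 / (m.factorial : ℂ)) *
            ∑ ℓ ∈ Finset.range (m + 1),
              (m.choose ℓ : ℂ) * iteratedDeriv (m - ℓ) k t₀ * iteratedDeriv ℓ h t₀)
      ≤ 4 * C * M / ρ ^ (2 * n) + (2 ^ m / (m.factorial : ℝ)) * K * H :=
  stmt_11_general ρ hρ n m γ γ' hγ' t₀ h k f M C K H hfM hkC hK hH
end
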